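/- arXiv:2105.03808 — 2 statements merged into one kernel-verified Lean document; each statement's English description precedes it below -/
import Mathlib

section
/- Let a = (a_1,…,a_n) be a tuple of integers with each a_i ≥ 2, and for k = 1,…,n set q_k := μ(a_{k+1},…,a_n)·d(a_1,…,a_{k−1}) (with μ of the empty tuple equal to 1 and d of the empty tuple equal to 1). Then for every λ ∈ ℂ and every (z_1,…,z_n) ∈ ℂ^n one has p_a(λ^{q_1} z_1, λ^{q_2} z_2, …, λ^{q_n} z_n) = λ^{d(a)} · p_a(z_1,…,z_n); that is, p_a is weighted homogeneous of degree d(a) with integer weights q_1,…,q_n. -/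
open scoped BigOperators

/-- The signed chain polynomial
`p_a(z_1,…,z_n) = −z_1^{a_1}z_2 + z_2^{a_2}z_3 − ⋯ + (−1)^n z_n^{a_n}` (0-based). -/
noncomputable def chainP (n : ℕ) (a : ℕ → ℕ) (z : ℕ → ℂ) : ℂ :=
  (∑ k ∈ Finset.range (n - 1), (-1 : ℂ) ^ (k + 1) * z k ^ a k * z (k + 1))
    + (-1 : ℂ) ^ n * z (n - 1) ^ a (n - 1)

/-- The Milnor number `μ(a) = Σ_{k=0}^{n} (−1)^k a_{k+1}⋯a_n` (0-based). -/
def muZ (n : ℕ) (a : ℕ → ℕ) : ℤ :=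
  ∑ k ∈ Finset.range (n + 1), (-1 : ℤ) ^ k * ∏ i ∈ Finset.Ico k n, (a i : ℤ)

/-- `d(a) = a_1 ⋯ a_n` (0-based). -/
def dd (n : ℕ) (a : ℕ → ℕ) : ℕ := ∏ i ∈ Finset.range n, a i

/-- The weight `q_k = μ(a_{k+1},…,a_n) · d(a_1,…,a_{k−1})` (0-based `k`). -/
def qWeight (n : ℕ) (a : ℕ → ℕ) (k : ℕ) : ℤ :=
  muZ (n - (k + 1)) (fun i => a (k + 1 + i)) * (dd k a : ℤ)

/-!
With `d = a₀ ⋯ a_{n-1}`, the weights satisfy `a_k q_k + q_{k+1} = d` for `k + 1 < n` and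
`a_{n-1} q_{n-1} = d`; the first identity is the recurrence
`μ(a_k, …, a_{n-1}) = a_k ⋯ a_{n-1} − μ(a_{k+1}, …, a_{n-1})` multiplied by `a₀ ⋯ a_{k-1}`.
These say exactly that every monomial `z_k^{a_k} z_{k+1}` and `z_{n-1}^{a_{n-1}}` of `p_a`
has weighted degree `d`. Since `d ≠ 0`, the rules `λ^(m + m') = λ^m λ^m'` needed to collect
the powers of `λ` hold also at `λ = 0`.
-/

lemma muZ_zero (a : ℕ → ℕ) : muZ 0 a = 1 := by simp [muZ]

lemma muZ_succ (n : ℕ) (a : ℕ → ℕ) :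
    muZ (n + 1) a = dd (n + 1) a - muZ n (fun i => a (i + 1)) := by
  have hshift (k : ℕ) :
      ∏ i ∈ Finset.Ico (k + 1) (n + 1), (a i : ℤ) = ∏ i ∈ Finset.Ico k n, (a (i + 1) : ℤ) :=
    (Finset.prod_Ico_add' (fun i => (a i : ℤ)) k n 1).symm
  simp only [muZ, dd, Finset.sum_range_succ' _ (n + 1), hshift, pow_succ, pow_zero, one_mul,
    ← Finset.range_eq_Ico, Nat.cast_prod]
  rw [sub_eq_neg_add, ← Finset.sum_neg_distrib]
  simp only [mul_neg_one, neg_mul]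

lemma dd_succ (n : ℕ) (a : ℕ → ℕ) : dd (n + 1) a = dd n a * a n :=
  Finset.prod_range_succ a n

lemma dd_add (m n : ℕ) (a : ℕ → ℕ) : dd (m + n) a = dd m a * dd n (fun i => a (m + i)) :=
  Finset.prod_range_add a m n

lemma dd_ne_zero {n : ℕ} {a : ℕ → ℕ} (ha : ∀ i < n, a i ≠ 0) : dd n a ≠ 0 :=
  Finset.prod_ne_zero_iff.mpr fun i hi => ha i (Finset.mem_range.mp hi)

lemma natCast_mul_qWeight_add_qWeight_succ {n k : ℕ} (hk : k + 1 < n) (a : ℕ → ℕ) :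
    (a k : ℤ) * qWeight n a k + qWeight n a (k + 1) = dd n a := by
  obtain ⟨m, rfl⟩ : ∃ m, n = k + 1 + (m + 1) := ⟨n - (k + 2), by omega⟩
  have hlen₁ : k + 1 + (m + 1) - (k + 1) = m + 1 := by omega
  have hlen₂ : k + 1 + (m + 1) - (k + 1 + 1) = m := by omega
  have htail : (fun i => a (k + 1 + (i + 1))) = fun i => a (k + 1 + 1 + i) := by
    funext i; congr 1; omega
  simp only [qWeight, hlen₁, hlen₂, muZ_succ, htail, dd_add, dd_succ]
  push_cast
  ring

lemma natCast_mul_qWeight_last {n : ℕ} (hn : 1 ≤ n) (a : ℕ → ℕ) :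
    (a (n - 1) : ℤ) * qWeight n a (n - 1) = dd n a := by
  obtain ⟨m, rfl⟩ : ∃ m, n = m + 1 := ⟨n - 1, by omega⟩
  simp only [qWeight, Nat.add_sub_cancel, Nat.sub_self, muZ_zero, one_mul, dd_succ]
  push_cast
  ring

section WeightedMonomial

variable {G₀ : Type*} [CommGroupWithZero G₀]

lemma mul_zpow_pow (t x : G₀) (q : ℤ) (e : ℕ) : (t ^ q * x) ^ e = t ^ ((e : ℤ) * q) * x ^ e := by
  rw [mul_pow, mul_comm (e : ℤ), zpow_mul, zpow_natCast]

lemma mul_zpow_pow_mul_mul_zpow (t x y : G₀) (q r : ℤ) (e : ℕ) (h : (e : ℤ) * q + r ≠ 0) :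
    (t ^ q * x) ^ e * (t ^ r * y) = t ^ ((e : ℤ) * q + r) * (x ^ e * y) := by
  rw [mul_zpow_pow, zpow_add' (.inr (.inl h)), mul_mul_mul_comm]

end WeightedMonomial

/-- `p_a` is weighted homogeneous of degree `d(a)` with integer
weights `q_1, …, q_n`. -/
theorem stmt_7 (n : ℕ) (hn : 1 ≤ n) (a : ℕ → ℕ) (ha : ∀ i < n, 2 ≤ a i) :
    ∀ lam : ℂ, ∀ z : ℕ → ℂ,
      chainP n a (fun k => lam ^ (qWeight n a k) * z k)
        = lam ^ ((dd n a : ℤ)) * chainP n a z := by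
  intro lam z
  have hd : (dd n a : ℤ) ≠ 0 := by
    exact_mod_cast dd_ne_zero fun i hi => by have := ha i hi; omega
  unfold chainP
  rw [mul_add, Finset.mul_sum]
  congr 1
  · refine Finset.sum_congr rfl fun k hk => ?_
    have hk : k + 1 < n := by have := Finset.mem_range.mp hk; omega
    have hrec := natCast_mul_qWeight_add_qWeight_succ hk a
    rw [mul_assoc, mul_zpow_pow_mul_mul_zpow _ _ _ _ _ _ (hrec ▸ hd), hrec]
    ring
  · rw [mul_zpow_pow, natCast_mul_qWeight_last hn]
    ring
end

section
/- Let n ≥ 2, let a = (a_1,…,a_n) be a tuple of integers with each a_i ≥ 2, let t ∈ ℂ, and let s ∈ ℂ with s ≠ 0. Suppose z = (z_1,…,z_n) ∈ ℂ^n satisfies g_a^{t,s}(z) = 0 and ∂g_a^{t,s}/∂z_j(z) = 0 for all j with 2 ≤ j ≤ n. Then z_i ≠ 0 for every i = 1,…,n, and the (n−1)×(n−1) matrix of second partial derivatives ( ∂²p_{−a}/∂z_i∂z_j (z_2,…,z_n) )_{2≤i,j≤n} is invertible. -/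
open scoped BigOperators

/-- `g_a^{t,s}(z) = z_1 − s z_2 − t z_1^{a_1} z_2 − p_{−a}(z_2,…,z_n)` (0-based). -/
noncomputable def gMap (n : ℕ) (a : ℕ → ℕ) (t s : ℂ) (z : ℕ → ℂ) : ℂ :=
  z 0 - s * z 1 - t * z 0 ^ a 0 * z 1
    - chainP (n - 1) (fun i => a (i + 1)) (fun i => z (i + 1))

/-- The complex partial derivative of `f` with respect to the `i`-th coordinate at `z`. -/
noncomputable def pd (f : (ℕ → ℂ) → ℂ) (i : ℕ) (z : ℕ → ℂ) : ℂ :=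
  deriv (fun w => f (Function.update z i w)) (z i)

/-!
Indices are 0-based: `n = m + 1`, `bₖ = aₖ₊₁` and `u = (z₁, …, z_m, 1)`. Then `p_{−a}` is the chain
`∑_{k<m} (-1)^{k+1} μₖ` in the monomials `μₖ = uₖ^{bₖ} uₖ₊₁`, and `g = 0` reads
`z₀ = c u₀ + ∑_{k<m} (-1)^{k+1} μₖ` with `c = s + t z₀^{a₀}`. Multiplying the critical equations by
`uₖ` gives `b₀ μ₀ = c u₀` and `bₖ₊₁ μₖ₊₁ = μₖ`. If `μ₀ = 0`, all `μₖ` vanish, so `z₀ = 0`,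
`c = s ≠ 0` and `u₀ = 0`, contradicting `b₀ u₀^{b₀-1} u₁ = c`. Hence every `μₖ`, and with it every
coordinate, is nonzero; and `z₀ ≠ 0` because `|b₀ μ₀| ≥ 2|μ₀|` beats the other terms, which decay
at least like `|μ₀|/2^k`.

The Hessian of the chain is tridiagonal with diagonal `dⱼ` and off-diagonal `eⱼ`, and the critical
equations give `eⱼ² = -ρⱼ dⱼ dⱼ₊₁` with `ρⱼ = bⱼ/((bⱼ-1)(bⱼ₊₁-1)) > 0`. Expanding along the first
row, the determinant divided by `∏ dⱼ` satisfies `q_{N+2} = q_{N+1} + ρ q_N`, so it is a real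
number `≥ 1`.
-/

open Finset Function

def tridiagEntry {R : Type*} [Zero R] (d e : ℕ → R) (i j : ℕ) : R :=
  if i = j then d i else if i = j + 1 then e j else if j = i + 1 then e i else 0

def tridiag {R : Type*} [Zero R] (N : ℕ) (d e : ℕ → R) : Matrix (Fin N) (Fin N) R :=
  Matrix.of fun i j => tridiagEntry d e i j

theorem det_tridiag_succ_succ {R : Type*} [CommRing R] (N : ℕ) (d e : ℕ → R) :
    (tridiag (N + 2) d e).det =
      d 0 * (tridiag (N + 1) (fun i => d (i + 1)) (fun i => e (i + 1))).det
        - e 0 ^ 2 * (tridiag N (fun i => d (i + 2)) (fun i => e (i + 2))).det := by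
  have minor_zero : (tridiag (N + 2) d e).submatrix Fin.succ (Fin.succAbove 0) =
      tridiag (N + 1) (fun i => d (i + 1)) (fun i => e (i + 1)) := by
    ext i j
    simp [tridiag, tridiagEntry]
  have minor_one : ((tridiag (N + 2) d e).submatrix Fin.succ (Fin.succAbove 1)).det =
      e 0 * (tridiag N (fun i => d (i + 2)) (fun i => e (i + 2))).det := by
    rw [Matrix.det_succ_column_zero, Fin.sum_univ_succ, Fintype.sum_eq_zero]
    · have hcols : Fin.succAbove (1 : Fin (N + 2)) ∘ Fin.succ = Fin.succ ∘ Fin.succ := by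
        ext j
        simp [Fin.succAbove, Fin.lt_def]
      have hminor : (tridiag (N + 2) d e).submatrix (Fin.succ ∘ Fin.succ) (Fin.succ ∘ Fin.succ) =
          tridiag N (fun i => d (i + 2)) (fun i => e (i + 2)) := by
        ext i j
        simp [tridiag, tridiagEntry]
      simp only [Matrix.submatrix_submatrix, Fin.succAbove_zero, hcols, hminor]
      simp [tridiag, tridiagEntry]
    · intro i
      simp [tridiag, tridiagEntry, Fin.succAbove]
  rw [Matrix.det_succ_row_zero, Fin.sum_univ_succ, Fin.sum_univ_succ, Fintype.sum_eq_zero,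
    minor_zero, Fin.succ_zero_eq_one, minor_one]
  · simp [tridiag, tridiagEntry, sq, mul_assoc, sub_eq_add_neg]
  · intro j
    simp [tridiag, tridiagEntry]

theorem exists_det_tridiag_eq_mul_prod : ∀ (N : ℕ) (d e : ℕ → ℂ),
    (∀ j, j + 1 < N → ∃ ρ : ℝ, 0 ≤ ρ ∧ e j ^ 2 = -ρ * (d j * d (j + 1))) →
    ∃ q : ℝ, 1 ≤ q ∧ (tridiag N d e).det = q * ∏ j ∈ range N, d j
  | 0, _, _, _ => ⟨1, le_rfl, by simp⟩
  | 1, d, e, _ => ⟨1, le_rfl, by simp [tridiag, tridiagEntry]⟩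
  | N + 2, d, e, he => by
    obtain ⟨q₁, hq₁, h₁⟩ := exists_det_tridiag_eq_mul_prod (N + 1) (fun i => d (i + 1))
      (fun i => e (i + 1)) fun j hj => he (j + 1) (by omega)
    obtain ⟨q₂, hq₂, h₂⟩ := exists_det_tridiag_eq_mul_prod N (fun i => d (i + 2))
      (fun i => e (i + 2)) fun j hj => he (j + 2) (by omega)
    obtain ⟨ρ, hρ, he₀⟩ := he 0 (by omega)
    refine ⟨q₁ + ρ * q₂, by nlinarith, ?_⟩
    rw [det_tridiag_succ_succ, h₁, h₂, he₀, prod_range_succ' d,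
      prod_range_succ' (fun j => d (j + 1))]
    push_cast
    ring

theorem det_tridiag_ne_zero {N : ℕ} {d e : ℕ → ℂ} (hd : ∀ j < N, d j ≠ 0)
    (he : ∀ j, j + 1 < N → ∃ ρ : ℝ, 0 ≤ ρ ∧ e j ^ 2 = -ρ * (d j * d (j + 1))) :
    (tridiag N d e).det ≠ 0 := by
  obtain ⟨q, hq, h⟩ := exists_det_tridiag_eq_mul_prod N d e he
  rw [h]
  exact mul_ne_zero (by exact_mod_cast (by linarith : q ≠ 0))
    (prod_ne_zero_iff.2 fun j hj => hd j (mem_range.1 hj))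

theorem sum_range_succ_add_le_two_mul (x : ℕ → ℝ) :
    ∀ m, (∀ k < m, 2 * x (k + 1) ≤ x k) → ∑ k ∈ range (m + 1), x k + x m ≤ 2 * x 0
  | 0, _ => by simp [two_mul]
  | m + 1, h => by
    have := sum_range_succ_add_le_two_mul x m fun k hk => h k (by omega)
    rw [sum_range_succ]
    linarith [h m (by omega)]

theorem eq_zero_iff_of_eq_mul_succ {M₀ : Type*} [MulZeroClass M₀] [NoZeroDivisors M₀] {m : ℕ}
    {μ β : ℕ → M₀}
    (hrec : ∀ k, k + 1 < m → β (k + 1) * μ (k + 1) = μ k) (hβ : ∀ k, k + 1 < m → β (k + 1) ≠ 0) :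
    ∀ k < m, μ k = 0 ↔ μ 0 = 0
  | 0, _ => Iff.rfl
  | k + 1, hk => by
    rw [← eq_zero_iff_of_eq_mul_succ hrec hβ k (by omega), ← hrec k hk, mul_eq_zero,
      or_iff_right (hβ k hk)]

theorem hasDerivAt_update_apply {𝕜 ι : Type*} [NontriviallyNormedField 𝕜] [DecidableEq ι]
    (u : ι → 𝕜) (j k : ι) (x : 𝕜) :
    HasDerivAt (fun y => update u j y k) (if k = j then 1 else 0) x := by
  by_cases h : k = j
  · subst h
    simpa using hasDerivAt_id' x
  · simpa [h] using hasDerivAt_const x (u k)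

def chainSum (m : ℕ) (b : ℕ → ℕ) (u : ℕ → ℂ) : ℂ :=
  ∑ k ∈ range m, (-1) ^ (k + 1) * u k ^ b k * u (k + 1)

def chainMono (b : ℕ → ℕ) (u : ℕ → ℂ) (k : ℕ) : ℂ :=
  u k ^ b k * u (k + 1)

def chainGrad (b : ℕ → ℕ) (u : ℕ → ℂ) (j : ℕ) : ℂ :=
  (-1) ^ (j + 1) * b j * u j ^ (b j - 1) * u (j + 1)
    + if j = 0 then 0 else (-1) ^ j * u (j - 1) ^ b (j - 1)

def chainHessDiag (b : ℕ → ℕ) (u : ℕ → ℂ) (j : ℕ) : ℂ :=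
  (-1) ^ (j + 1) * b j * (b j - 1 : ℕ) * u j ^ (b j - 2) * u (j + 1)

def chainHessOff (b : ℕ → ℕ) (u : ℕ → ℂ) (j : ℕ) : ℂ :=
  (-1) ^ (j + 1) * b j * u j ^ (b j - 1)

theorem chainP_eq_chainSum {m : ℕ} (hm : 1 ≤ m) (b : ℕ → ℕ) (w : ℕ → ℂ) :
    chainP m b w = chainSum m b (update w m 1) := by
  obtain ⟨m, rfl⟩ := Nat.exists_eq_add_of_le' hm
  rw [chainSum, sum_range_succ, chainP, Nat.add_sub_cancel]
  congr 1
  · refine sum_congr rfl fun k hk => ?_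
    have := mem_range.1 hk
    rw [update_of_ne (by omega), update_of_ne (by omega)]
  · simp

theorem hasDerivAt_chainSum_update (b : ℕ → ℕ) (u : ℕ → ℂ) {m j : ℕ} (hj : j < m) :
    HasDerivAt (fun x => chainSum m b (update u j x)) (chainGrad b u j) (u j) := by
  have h := HasDerivAt.fun_sum (u := range m) fun k _ =>
    (((hasDerivAt_update_apply u j k (u j)).fun_pow (b k)).const_mul
      ((-1 : ℂ) ^ (k + 1))).fun_mul (hasDerivAt_update_apply u j (k + 1) (u j))
  simp only [update_eq_self] at h
  refine h.congr_deriv ?_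
  rcases j with _ | j
  · simp [chainGrad, hj]
  · simp [chainGrad, sum_add_distrib, hj, Nat.lt_of_succ_lt hj, mul_assoc]

theorem hasDerivAt_chainGrad_update (b : ℕ → ℕ) (u : ℕ → ℂ) (i j : ℕ) :
    HasDerivAt (fun x => chainGrad b (update u i x) j)
      (tridiagEntry (chainHessDiag b u) (chainHessOff b u) i j) (u i) := by
  have h₁ := (((hasDerivAt_update_apply u i j (u i)).fun_pow (b j - 1)).const_mul
    ((-1 : ℂ) ^ (j + 1) * b j)).fun_mul (hasDerivAt_update_apply u i (j + 1) (u i))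
  simp only [update_eq_self] at h₁
  rcases j with _ | j
  · refine (h₁.add_const 0).congr_deriv ?_
    simp only [tridiagEntry, chainHessDiag, chainHessOff, Nat.sub_sub]
    split_ifs <;> first | omega | contradiction | (subst_vars; ring)
  · have h₂ := ((hasDerivAt_update_apply u i j (u i)).fun_pow (b j)).const_mul ((-1 : ℂ) ^ (j + 1))
    simp only [update_eq_self] at h₂
    refine (h₁.add h₂).congr_deriv ?_
    simp only [tridiagEntry, chainHessDiag, chainHessOff, Nat.sub_sub]
    split_ifs <;> first | omega | contradiction | (subst_vars; ring)

theorem hasDerivAt_chainP_update {m j : ℕ} (hj : j < m) (b : ℕ → ℕ) (w : ℕ → ℂ) :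
    HasDerivAt (fun x => chainP m b (update w j x)) (chainGrad b (update w m 1) j) (w j) := by
  have h := hasDerivAt_chainSum_update b (update w m 1) hj
  rw [update_of_ne hj.ne] at h
  simpa only [chainP_eq_chainSum (by omega : 1 ≤ m), update_comm hj.ne] using h

theorem pd_pd_chainP {m i j : ℕ} (hi : i < m) (hj : j < m) (b : ℕ → ℕ) (w : ℕ → ℂ) :
    pd (pd (chainP m b) j) i w =
      tridiagEntry (chainHessDiag b (update w m 1)) (chainHessOff b (update w m 1)) i j := by
  have hgrad : pd (chainP m b) j = fun v => chainGrad b (update v m 1) j :=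
    funext fun v => (hasDerivAt_chainP_update hj b v).deriv
  have h := hasDerivAt_chainGrad_update b (update w m 1) i j
  rw [update_of_ne hi.ne] at h
  rw [hgrad]
  simp only [pd, update_comm hi.ne]
  exact h.deriv

theorem hessian_chainP_eq_tridiag (m : ℕ) (b : ℕ → ℕ) (w : ℕ → ℂ) :
    (Matrix.of fun i j : Fin m => pd (pd (chainP m b) j) i w) =
      tridiag m (chainHessDiag b (update w m 1)) (chainHessOff b (update w m 1)) := by
  ext i j
  exact pd_pd_chainP i.2 j.2 b w

theorem pd_gMap_succ {n i : ℕ} (hi : i + 1 < n) (a : ℕ → ℕ) (t s : ℂ) (z : ℕ → ℂ) :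
    pd (gMap n a t s) (i + 1) z = (if i = 0 then -(s + t * z 0 ^ a 0) else 0)
      - chainGrad (fun k => a (k + 1)) (update (fun k => z (k + 1)) (n - 1) 1) i := by
  have hC := hasDerivAt_chainP_update (m := n - 1) (by omega) (fun k => a (k + 1))
    (fun k => z (k + 1)) (j := i)
  have h₁ := hasDerivAt_update_apply z (i + 1) 1 (z (i + 1))
  have H := (((hasDerivAt_const (z (i + 1)) (z 0)).fun_sub (h₁.const_mul s)).fun_sub
    (h₁.const_mul (t * z 0 ^ a 0))).fun_sub hC
  have hfun : (fun x => gMap n a t s (update z (i + 1) x)) = fun x =>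
      z 0 - s * update z (i + 1) x 1 - t * z 0 ^ a 0 * update z (i + 1) x 1
        - chainP (n - 1) (fun k => a (k + 1)) (update (fun k => z (k + 1)) i x) := by
    ext x
    rw [gMap, update_of_ne (by omega), update_comp_eq_of_injective' z (add_left_injective 1)]
  rw [pd, hfun, H.deriv]
  rcases i with _ | i
  · simp [sub_eq_add_neg, add_comm]
  · simp

theorem chainSum_eq_sum_chainMono (m : ℕ) (b : ℕ → ℕ) (u : ℕ → ℂ) :
    chainSum m b u = ∑ k ∈ range m, (-1) ^ (k + 1) * chainMono b u k := by
  simp only [chainSum, chainMono, mul_assoc]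

theorem norm_chainSum_le (m : ℕ) (b : ℕ → ℕ) (u : ℕ → ℂ) :
    ‖chainSum m b u‖ ≤ ∑ k ∈ range m, ‖chainMono b u k‖ := by
  rw [chainSum_eq_sum_chainMono]
  refine (norm_sum_le _ _).trans_eq (sum_congr rfl fun k _ => ?_)
  simp

theorem chainGrad_zero (b : ℕ → ℕ) (u : ℕ → ℂ) :
    chainGrad b u 0 = -(b 0 * u 0 ^ (b 0 - 1) * u 1) := by
  simp [chainGrad]

theorem chainGrad_succ_eq_zero_iff {b : ℕ → ℕ} {u : ℕ → ℂ} {i : ℕ} :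
    chainGrad b u (i + 1) = 0 ↔
      b (i + 1) * u (i + 1) ^ (b (i + 1) - 1) * u (i + 2) = u i ^ b i := by
  have : chainGrad b u (i + 1) =
      (-1) ^ i * (b (i + 1) * u (i + 1) ^ (b (i + 1) - 1) * u (i + 2) - u i ^ b i) := by
    simp only [chainGrad, Nat.add_eq_zero_iff, one_ne_zero, and_false, if_false,
      Nat.add_sub_cancel]
    ring
  rw [this, mul_eq_zero, or_iff_right (pow_ne_zero _ (by norm_num)), sub_eq_zero]

theorem mul_chainMono_succ {b : ℕ → ℕ} {u : ℕ → ℂ} {i : ℕ} (hb : 1 ≤ b (i + 1))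
    (h : chainGrad b u (i + 1) = 0) :
    b (i + 1) * chainMono b u (i + 1) = chainMono b u i := by
  obtain ⟨p, hp⟩ := Nat.exists_eq_add_of_le' hb
  rw [chainGrad_succ_eq_zero_iff, hp, Nat.add_sub_cancel] at h
  simp only [chainMono, hp, pow_succ]
  linear_combination u (i + 1) * h

theorem mul_chainMono_zero {b : ℕ → ℕ} {u : ℕ → ℂ} {c : ℂ} (hb : 1 ≤ b 0)
    (h : chainGrad b u 0 = -c) : c * u 0 = b 0 * chainMono b u 0 := by
  obtain ⟨p, hp⟩ := Nat.exists_eq_add_of_le' hb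
  rw [chainGrad_zero, hp, Nat.add_sub_cancel] at h
  simp only [chainMono, hp, pow_succ]
  linear_combination u 0 * h

theorem norm_chainSum_lt {m : ℕ} (hm : 1 ≤ m) {b : ℕ → ℕ} (hb : ∀ k < m, 2 ≤ b k) {u : ℕ → ℂ}
    (hsucc : ∀ i, i + 1 < m → chainGrad b u (i + 1) = 0)
    (hlast : chainMono b u (m - 1) ≠ 0) :
    ‖chainSum m b u‖ < 2 * ‖chainMono b u 0‖ := by
  have halving : ∀ k < m - 1, 2 * ‖chainMono b u (k + 1)‖ ≤ ‖chainMono b u k‖ := fun k hk => by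
    rw [← mul_chainMono_succ (by linarith [hb (k + 1) (by omega)]) (hsucc k (by omega)), norm_mul,
      Complex.norm_natCast]
    gcongr
    exact_mod_cast hb (k + 1) (by omega)
  have h := sum_range_succ_add_le_two_mul (fun k => ‖chainMono b u k‖) (m - 1) halving
  rw [Nat.sub_add_cancel hm] at h
  linarith [norm_chainSum_le m b u, norm_pos_iff.2 hlast]

theorem chainMono_ne_zero {m : ℕ} (hm : 1 ≤ m) {b : ℕ → ℕ} (hb : ∀ k < m, 2 ≤ b k)
    {u : ℕ → ℂ} {c : ℂ} (h0 : chainGrad b u 0 = -c)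
    (hsucc : ∀ i, i + 1 < m → chainGrad b u (i + 1) = 0)
    (hc : c * u 0 + chainSum m b u = 0 → c ≠ 0) :
    ∀ k < m, chainMono b u k ≠ 0 := by
  have hiff := eq_zero_iff_of_eq_mul_succ (β := fun k => (b k : ℂ))
    (fun k hk => mul_chainMono_succ (by linarith [hb (k + 1) hk]) (hsucc k hk)) fun k hk => by
      have := hb (k + 1) hk
      exact Nat.cast_ne_zero.2 (by omega)
  suffices hμ₀ : chainMono b u 0 ≠ 0 from fun k hk h => hμ₀ ((hiff k hk).1 h)
  intro hμ₀
  have hsum : chainSum m b u = 0 := by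
    rw [chainSum_eq_sum_chainMono]
    exact sum_eq_zero fun k hk => by rw [(hiff k (mem_range.1 hk)).2 hμ₀, mul_zero]
  have hcu : c * u 0 = 0 := by
    rw [mul_chainMono_zero (by linarith [hb 0 hm]) h0, hμ₀, mul_zero]
  have hc₀ : c ≠ 0 := hc (by rw [hcu, hsum, add_zero])
  have hu₀ : u 0 = 0 := (mul_eq_zero.1 hcu).resolve_left hc₀
  rw [chainGrad_zero, hu₀, zero_pow (by have := hb 0 hm; omega)] at h0
  exact hc₀ (by linear_combination h0)

theorem mul_add_chainSum_ne_zero {m : ℕ} (hm : 1 ≤ m) {b : ℕ → ℕ} (hb : ∀ k < m, 2 ≤ b k)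
    {u : ℕ → ℂ} {c : ℂ} (h0 : chainGrad b u 0 = -c)
    (hsucc : ∀ i, i + 1 < m → chainGrad b u (i + 1) = 0)
    (hμ : ∀ k < m, chainMono b u k ≠ 0) :
    c * u 0 + chainSum m b u ≠ 0 := by
  have hlt := norm_chainSum_lt hm hb hsucc (hμ (m - 1) (by omega))
  have hb₀ : (2 : ℝ) ≤ b 0 := by exact_mod_cast hb 0 hm
  rw [mul_chainMono_zero (by linarith [hb 0 hm]) h0, Ne, add_eq_zero_iff_eq_neg']
  intro hsum
  rw [hsum, norm_neg, norm_mul, Complex.norm_natCast] at hlt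
  nlinarith [norm_nonneg (chainMono b u 0)]

theorem chainHessDiag_ne_zero {b : ℕ → ℕ} {u : ℕ → ℂ} {j : ℕ} (hb : 2 ≤ b j)
    (h : chainMono b u j ≠ 0) : chainHessDiag b u j ≠ 0 := by
  obtain ⟨hu, hu'⟩ := mul_ne_zero_iff.1 h
  have hb₁ : ((b j - 1 : ℕ) : ℂ) ≠ 0 := Nat.cast_ne_zero.2 (by omega)
  have hb₀ : (b j : ℂ) ≠ 0 := Nat.cast_ne_zero.2 (by omega)
  simp only [chainHessDiag]
  exact mul_ne_zero (mul_ne_zero (mul_ne_zero (mul_ne_zero (pow_ne_zero _ (by norm_num)) hb₀) hb₁)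
    (pow_ne_zero _ (ne_zero_pow (by omega) hu))) hu'

theorem chainHessOff_sq {b : ℕ → ℕ} {u : ℕ → ℂ} {j : ℕ} (hb : 2 ≤ b j) (hb' : 2 ≤ b (j + 1))
    (h : chainGrad b u (j + 1) = 0) :
    ∃ ρ : ℝ, 0 ≤ ρ ∧
      chainHessOff b u j ^ 2 = -ρ * (chainHessDiag b u j * chainHessDiag b u (j + 1)) := by
  refine ⟨b j / ((b j - 1 : ℕ) * (b (j + 1) - 1 : ℕ)), by positivity, ?_⟩
  rw [chainGrad_succ_eq_zero_iff] at h
  obtain ⟨p, hp⟩ := Nat.exists_eq_add_of_le' hb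
  obtain ⟨q, hq⟩ := Nat.exists_eq_add_of_le' hb'
  simp only [chainHessOff, chainHessDiag, hp, hq, Nat.add_sub_cancel] at h ⊢
  push_cast at h ⊢
  field_simp
  linear_combination (-(-1 : ℂ) ^ (j + 1) * ((p : ℂ) + 2) ^ 2 * u j ^ p) * h

theorem det_chainHess_ne_zero {m : ℕ} {b : ℕ → ℕ} (hb : ∀ k < m, 2 ≤ b k) {u : ℕ → ℂ}
    (hsucc : ∀ i, i + 1 < m → chainGrad b u (i + 1) = 0)
    (hμ : ∀ k < m, chainMono b u k ≠ 0) :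
    (tridiag m (chainHessDiag b u) (chainHessOff b u)).det ≠ 0 :=
  det_tridiag_ne_zero (fun j hj => chainHessDiag_ne_zero (hb j hj) (hμ j hj))
    fun j hj => chainHessOff_sq (hb j (by omega)) (hb (j + 1) hj) (hsucc j hj)

/-- If `s ≠ 0`, `g_a^{t,s}(z) = 0` and `∂g_a^{t,s}/∂z_j(z) = 0` for
`2 ≤ j ≤ n`, then all coordinates `z_1, …, z_n` are nonzero and the Hessian matrix of
`p_{−a}` at `(z_2, …, z_n)` is invertible. -/
theorem stmt_13 (n : ℕ) (hn : 2 ≤ n) (a : ℕ → ℕ) (ha : ∀ i < n, 2 ≤ a i)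
    (t s : ℂ) (hs : s ≠ 0) (z : ℕ → ℂ)
    (hz : gMap n a t s z = 0)
    (hcrit : ∀ j : ℕ, 1 ≤ j → j < n → pd (gMap n a t s) j z = 0) :
    (∀ i : ℕ, i < n → z i ≠ 0) ∧
    IsUnit
      (Matrix.det
        (Matrix.of fun i j : Fin (n - 1) =>
          pd (pd (chainP (n - 1) (fun i => a (i + 1))) (j : ℕ)) (i : ℕ)
            (fun i => z (i + 1)))) := by
  obtain ⟨m, rfl⟩ : ∃ m, n = m + 1 := ⟨n - 1, by omega⟩
  have hm : 1 ≤ m := by omega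
  set b : ℕ → ℕ := fun i => a (i + 1)
  set u := update (fun i => z (i + 1)) m 1
  have hb : ∀ k < m, 2 ≤ b k := fun k hk => ha (k + 1) (by omega)
  have hgrad : ∀ i < m, chainGrad b u i = if i = 0 then -(s + t * z 0 ^ a 0) else 0 :=
    fun i hi => (sub_eq_zero.1 ((pd_gMap_succ (by omega) a t s z).symm.trans
      (hcrit (i + 1) (by omega) (by omega)))).symm
  have h0 : chainGrad b u 0 = -(s + t * z 0 ^ a 0) := by simpa using hgrad 0 hm
  have hsucc : ∀ i, i + 1 < m → chainGrad b u (i + 1) = 0 := fun i hi => by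
    simpa using hgrad (i + 1) hi
  have hval : z 0 = (s + t * z 0 ^ a 0) * u 0 + chainSum m b u := by
    rw [← chainP_eq_chainSum hm, show u 0 = z 1 from update_of_ne (by omega) _ _]
    rw [gMap, Nat.add_sub_cancel] at hz
    linear_combination hz
  have hμ := chainMono_ne_zero hm hb h0 hsucc fun h => by
    rw [← hval] at h
    rw [h, zero_pow (by have := ha 0 (by omega); omega), mul_zero, add_zero]
    exact hs
  refine ⟨fun i hi => ?_, ?_⟩
  · rcases i with _ | i
    · exact hval ▸ mul_add_chainSum_ne_zero hm hb h0 hsucc hμ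
    · have := ne_zero_pow (by have := hb i (by omega); omega)
        (left_ne_zero_of_mul (hμ i (by omega)))
      rwa [show u i = z (i + 1) from update_of_ne (by omega) _ _] at this
  · have := (det_chainHess_ne_zero hb hsucc hμ).isUnit
    rwa [← hessian_chainP_eq_tridiag] at this
end
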